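/- arXiv:2507.13338 — 2 statements merged into one kernel-verified Lean document; each statement's English description precedes it below -/
import Mathlib

section
/- Let η > 0, 0 < λ ≤ 1, and β > 0, and define the spectrally-clipped-weight-decay update on a singular value x ≥ 0 by u(x) = x + η if x + η ≤ β, and u(x) = (1 − λ)(x + η) + λβ if x + η > β. Set σ_eq = β + ((1 − λ)/λ)·η. Then: (i) u(σ_eq) = σ_eq; (ii) for every x > σ_eq, u(x) < x; and (iii) for every x with 0 ≤ x < σ_eq, u(x) > x. Hence σ_eq is an equilibrium point toward which the update pulls the top singular value. -/
/-- For `η > 0`, `0 < λ ≤ 1`, `β > 0`, the spectrally-clipped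
weight decay update `u(x) = x + η` if `x + η ≤ β` and
`u(x) = (1 − λ)(x + η) + λβ` otherwise has an equilibrium point
`σ_eq = β + ((1 − λ)/λ)·η`: (i) `u(σ_eq) = σ_eq`; (ii) `u(x) < x` for every
`x > σ_eq`; (iii) `u(x) > x` for every `0 ≤ x < σ_eq`. -/
theorem spectrally_clipped_weight_decay_equilibrium
    (η lam β : ℝ) (hη : 0 < η) (hlam0 : 0 < lam) (hlam1 : lam ≤ 1) (hβ : 0 < β)
    (u : ℝ → ℝ)
    (hu : ∀ x : ℝ, u x =
      if x + η ≤ β then x + η else (1 - lam) * (x + η) + lam * β)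
    (σeq : ℝ) (hσeq : σeq = β + (1 - lam) / lam * η) :
    u σeq = σeq ∧ (∀ x : ℝ, σeq < x → u x < x) ∧
      (∀ x : ℝ, 0 ≤ x → x < σeq → x < u x) := by
  have hlamne : lam ≠ 0 := ne_of_gt hlam0
  have hkey : ∀ x : ℝ, ¬ x + η ≤ β → u x - x = lam * (σeq - x) := by
    intro x hx
    rw [hu x, if_neg hx, hσeq]
    field_simp
    ring
  have hσβ : ¬ σeq + η ≤ β := by
    push_neg
    rw [hσeq]
    have : 0 < (1 - lam) / lam * η + η := by
      have h1 : 0 ≤ (1 - lam) / lam * η :=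
        mul_nonneg (div_nonneg (by linarith) hlam0.le) hη.le
      linarith
    linarith
  refine ⟨?_, ?_, ?_⟩
  · have := hkey σeq hσβ
    simp at this
    linarith [this]
  · intro x hx
    have hnb : ¬ x + η ≤ β := by
      push_neg at hσβ ⊢; linarith
    have := hkey x hnb
    nlinarith
  · intro x hx0 hx
    by_cases h : x + η ≤ β
    · rw [hu x, if_pos h]; linarith
    · have := hkey x h
      nlinarith
end

section
/- Let ℓ, d_Q, d_V be positive integers, let M be a fixed real ℓ×ℓ mask matrix, and define functional attention F(q, k, v) = softmax((1/d_Q)·q·kᵀ + M)·v for q, k ∈ ℝ^{ℓ×d_Q} and v ∈ ℝ^{ℓ×d_V}, where softmax acts row-wise: softmax(z)_{im} = exp(z_{im}) / Σ_m' exp(z_{im'}). Then F is differentiable, and for every (q, k, v) and every perturbation (Δq, Δk, Δv), the Fréchet derivative satisfies ‖∇F(q,k,v)·(Δq, Δk, Δv)‖_{∞RMS} ≤ max(1, ‖v‖_{∞RMS}·max(‖q‖_{∞RMS}, ‖k‖_{∞RMS}))·(‖Δq‖_{∞RMS} + ‖Δk‖_{∞RMS} + ‖Δv‖_{∞RMS}).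 That is, functional attention with 1/d_Q scaling has Lipschitz bound max(1, ‖v‖·max(‖q‖, ‖k‖)) at (q, k, v). -/
/-
Along the line `t ↦ (q, k, v) + t • (Δq, Δk, Δv)`, row `i` of the derivative of `F` is
`∑ₘ pₘ (bₘ - β) vₘ + ∑ₘ pₘ Δvₘ`, where `p` is the `i`-th softmax row, `bₘ = (Δqᵢ·kₘ + qᵢ·Δkₘ)/d_Q`
and `β = ∑ₘ pₘ bₘ`. The RMS norm is a rescaled Euclidean norm, so Cauchy–Schwarz gives
`|bₘ| ≤ ‖Δq‖‖k‖ + ‖q‖‖Δk‖` and the triangle inequality bounds the row by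
`(∑ₘ pₘ |bₘ - β|) ‖v‖ + ‖Δv‖`. A mean absolute deviation is at most the standard deviation,
hence at most `max |bₘ|`; this yields
`(‖Δq‖‖k‖ + ‖q‖‖Δk‖) ‖v‖ + ‖Δv‖ ≤ max(1, ‖v‖ max(‖q‖, ‖k‖)) (‖Δq‖ + ‖Δk‖ + ‖Δv‖)`.
-/

open Matrix

attribute [local instance] Matrix.normedAddCommGroup Matrix.normedSpace

/-- The `∞RMS` norm of `x ∈ ℝ^{ℓ×d}`: the maximum over rows (token positions)
of the RMS norm `sqrt((1/d)·Σ_j x_{ij}²)` of the corresponding row. -/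
noncomputable def infRMS {l d : ℕ} (x : Matrix (Fin l) (Fin d) ℝ) : ℝ :=
  ⨆ i : Fin l, Real.sqrt ((1 / (d : ℝ)) * ∑ j, x i j ^ 2)

/-- Row-wise softmax: `softmax(z)_{im} = exp(z_{im}) / Σ_{m'} exp(z_{im'})`. -/
noncomputable def softmaxRows {l m : ℕ} (z : Matrix (Fin l) (Fin m) ℝ) :
    Matrix (Fin l) (Fin m) ℝ :=
  Matrix.of fun i j => Real.exp (z i j) / ∑ j', Real.exp (z i j')

/-- Functional attention with `1/d_Q` scaling:
`F(q, k, v) = softmax((1/d_Q)·q·kᵀ + M)·v`. -/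
noncomputable def attnF {l dQ dV : ℕ} (M : Matrix (Fin l) (Fin l) ℝ)
    (qkv : Matrix (Fin l) (Fin dQ) ℝ × Matrix (Fin l) (Fin dQ) ℝ ×
      Matrix (Fin l) (Fin dV) ℝ) : Matrix (Fin l) (Fin dV) ℝ :=
  softmaxRows ((1 / (dQ : ℝ)) • (qkv.1 * qkv.2.1ᵀ) + M) * qkv.2.2

/- `infRMS x` unfolds to `⨆ i, rms (x i)`. -/
noncomputable def rms {d : ℕ} (x : Fin d → ℝ) : ℝ :=
  Real.sqrt ((1 / (d : ℝ)) * ∑ j, x j ^ 2)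

section RMS

variable {d : ℕ}

theorem rms_eq_inv_sqrt_mul_norm (x : Fin d → ℝ) :
    rms x = (√(d : ℝ))⁻¹ * ‖WithLp.toLp 2 x‖ := by
  rw [rms, EuclideanSpace.norm_eq, Real.sqrt_mul (by positivity), one_div, Real.sqrt_inv]
  simp only [Real.norm_eq_abs, sq_abs]

theorem rms_nonneg (x : Fin d → ℝ) : 0 ≤ rms x := Real.sqrt_nonneg _

theorem rms_add_le (x y : Fin d → ℝ) : rms (x + y) ≤ rms x + rms y := by
  simp only [rms_eq_inv_sqrt_mul_norm, WithLp.toLp_add, ← mul_add]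
  exact mul_le_mul_of_nonneg_left (norm_add_le _ _) (by positivity)

theorem rms_sum_smul_le {ι : Type*} (s : Finset ι) (c : ι → ℝ) (w : ι → Fin d → ℝ) :
    rms (∑ m ∈ s, c m • w m) ≤ ∑ m ∈ s, |c m| * rms (w m) := by
  simp only [rms_eq_inv_sqrt_mul_norm, WithLp.toLp_sum, WithLp.toLp_smul, mul_left_comm _ (_)⁻¹,
    ← Finset.mul_sum]
  refine mul_le_mul_of_nonneg_left ((norm_sum_le _ _).trans (le_of_eq ?_)) (by positivity)
  simp only [norm_smul, Real.norm_eq_abs]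

theorem abs_dotProduct_div_le_rms_mul_rms (a b : Fin d → ℝ) :
    |a ⬝ᵥ b| / d ≤ rms a * rms b := by
  have hinner : a ⬝ᵥ b = inner ℝ (WithLp.toLp 2 a) (WithLp.toLp 2 b) := by
    rw [EuclideanSpace.inner_toLp_toLp, star_trivial, dotProduct_comm]
  have hd : (√(d : ℝ))⁻¹ * (√(d : ℝ))⁻¹ = 1 / d := by
    rw [← mul_inv, Real.mul_self_sqrt (Nat.cast_nonneg d), one_div]
  rw [rms_eq_inv_sqrt_mul_norm, rms_eq_inv_sqrt_mul_norm, hinner,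
    mul_mul_mul_comm, hd, div_eq_mul_one_div, mul_comm]
  exact mul_le_mul_of_nonneg_left (abs_real_inner_le_norm _ _) (by positivity)

theorem rms_le_infRMS {l : ℕ} (w : Matrix (Fin l) (Fin d) ℝ) (i : Fin l) : rms (w i) ≤ infRMS w :=
  le_ciSup (f := fun i => rms (w i)) (Finite.bddAbove_range _) i

theorem infRMS_nonneg {l : ℕ} (w : Matrix (Fin l) (Fin d) ℝ) : 0 ≤ infRMS w :=
  Real.iSup_nonneg fun i => rms_nonneg (w i)

theorem infRMS_le {l : ℕ} {w : Matrix (Fin l) (Fin d) ℝ} {c : ℝ} (h : ∀ i, rms (w i) ≤ c)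
    (hc : 0 ≤ c) : infRMS w ≤ c :=
  Real.iSup_le h hc

theorem rms_mul_row_le {ι : Type*} {l : ℕ} (C : Matrix ι (Fin l) ℝ) (w : Matrix (Fin l) (Fin d) ℝ)
    (i : ι) : rms ((C * w) i) ≤ (∑ m, |C i m|) * infRMS w := by
  have hrow : (C * w) i = ∑ m, C i m • w m := by
    ext j; simp [Matrix.mul_apply]
  rw [hrow, Finset.sum_mul]
  exact (rms_sum_smul_le _ _ _).trans <| Finset.sum_le_sum fun m _ =>
    mul_le_mul_of_nonneg_left (rms_le_infRMS w m) (abs_nonneg _)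

theorem abs_smul_mul_transpose_apply_le {l : ℕ} (x y : Matrix (Fin l) (Fin d) ℝ) (i m : Fin l) :
    |((1 / (d : ℝ)) • (x * yᵀ)) i m| ≤ infRMS x * infRMS y := by
  have h := abs_dotProduct_div_le_rms_mul_rms (x i) (y m)
  have hentry : (x * yᵀ) i m = x i ⬝ᵥ y m := rfl
  rw [Matrix.smul_apply, hentry, smul_eq_mul, abs_mul, abs_of_nonneg (by positivity),
    one_div_mul_eq_div]
  exact h.trans
    (mul_le_mul (rms_le_infRMS x i) (rms_le_infRMS y m) (rms_nonneg _) (infRMS_nonneg _))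

end RMS

theorem sum_mul_abs_sub_weighted_mean_le {ι : Type*} [Fintype ι] {p x : ι → ℝ} {B : ℝ}
    (hp : ∀ i, 0 ≤ p i) (hp1 : ∑ i, p i = 1) (hx : ∀ i, |x i| ≤ B) :
    ∑ i, p i * |x i - ∑ m, p m * x m| ≤ B := by
  -- mean absolute deviation ≤ standard deviation ≤ B (the triangle inequality gives only 2B)
  set β := ∑ m, p m * x m
  obtain ⟨i₀⟩ : Nonempty ι := by
    by_contra h
    simp [not_nonempty_iff.mp h] at hp1
  have hB : 0 ≤ B := (abs_nonneg _).trans (hx i₀)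
  have hvar : ∑ i, p i * (x i - β) ^ 2 = ∑ i, p i * x i ^ 2 - β ^ 2 := by
    have hexpand : ∀ i, p i * (x i - β) ^ 2 = p i * x i ^ 2 - 2 * β * (p i * x i) + β ^ 2 * p i :=
      fun i => by ring
    simp only [hexpand, Finset.sum_add_distrib, Finset.sum_sub_distrib, ← Finset.mul_sum, hp1]
    ring
  have hjensen : (∑ i, p i * |x i - β|) ^ 2 ≤ ∑ i, p i * (x i - β) ^ 2 := by
    have := Finset.sum_sq_le_sum_mul_sum_of_sq_le_mul Finset.univ (fun i _ => hp i)
      (fun i _ => mul_nonneg (hp i) (sq_nonneg (x i - β)))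
      (r := fun i => p i * |x i - β|) (fun i _ => le_of_eq (by rw [mul_pow, sq_abs]; ring))
    rwa [hp1, one_mul] at this
  have hsecond : ∑ i, p i * x i ^ 2 ≤ B ^ 2 := by
    calc ∑ i, p i * x i ^ 2 ≤ ∑ i, p i * B ^ 2 := Finset.sum_le_sum fun i _ =>
          mul_le_mul_of_nonneg_left (sq_le_sq' (abs_le.mp (hx i)).1 (abs_le.mp (hx i)).2) (hp i)
      _ = B ^ 2 := by rw [← Finset.sum_mul, hp1, one_mul]
  refine le_of_abs_le (abs_le_of_sq_le_sq ?_ hB)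
  linarith [sq_nonneg β]

noncomputable def softmax {ι : Type*} [Fintype ι] (z : ι → ℝ) : ι → ℝ :=
  fun m => Real.exp (z m) / ∑ m', Real.exp (z m')

noncomputable def softmaxDeriv {ι : Type*} [Fintype ι] (z dz : ι → ℝ) : ι → ℝ :=
  fun m => softmax z m * (dz m - ∑ m', softmax z m' * dz m')

section Softmax

variable {ι : Type*} [Fintype ι]

theorem softmaxRows_apply {l n : ℕ} (z : Matrix (Fin l) (Fin n) ℝ) (i : Fin l) :
    softmaxRows z i = softmax (z i) := rfl

theorem sum_exp_pos (z : ι → ℝ) (m : ι) : 0 < ∑ m', Real.exp (z m') :=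
  Finset.sum_pos (fun _ _ => Real.exp_pos _) ⟨m, Finset.mem_univ m⟩

theorem softmax_nonneg (z : ι → ℝ) (m : ι) : 0 ≤ softmax z m :=
  div_nonneg (Real.exp_pos _).le (Finset.sum_nonneg fun _ _ => (Real.exp_pos _).le)

theorem sum_softmax [Nonempty ι] (z : ι → ℝ) : ∑ m, softmax z m = 1 := by
  obtain ⟨m⟩ := ‹Nonempty ι›
  simp only [softmax, ← Finset.sum_div]
  exact div_self (sum_exp_pos z m).ne'

theorem sum_abs_softmaxDeriv_le [Nonempty ι] {z dz : ι → ℝ} {c : ℝ} (h : ∀ m, |dz m| ≤ c) :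
    ∑ m, |softmaxDeriv z dz m| ≤ c := by
  simp only [softmaxDeriv, abs_mul, abs_of_nonneg (softmax_nonneg z _)]
  exact sum_mul_abs_sub_weighted_mean_le (softmax_nonneg z) (sum_softmax z) h

theorem Differentiable.softmax {E : Type*} [NormedAddCommGroup E] [NormedSpace ℝ E]
    {z : E → ι → ℝ} (hz : Differentiable ℝ z) : Differentiable ℝ fun x => softmax (z x) :=
  differentiable_pi.mpr fun m => by
    simp only [_root_.softmax, div_eq_mul_inv]
    exact (differentiable_pi.mp hz m).exp.mul <|
      (Differentiable.fun_sum fun m' _ => (differentiable_pi.mp hz m').exp).inv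
        fun x => (sum_exp_pos (z x) m).ne'

theorem HasDerivAt.softmax {z : ℝ → ι → ℝ} {dz : ι → ℝ} {t : ℝ} (hz : HasDerivAt z dz t) :
    HasDerivAt (fun t => softmax (z t)) (softmaxDeriv (z t) dz) t := by
  refine hasDerivAt_pi.mpr fun m => ?_
  have hexp : ∀ m, HasDerivAt (fun t => Real.exp (z t m)) (Real.exp (z t m) * dz m) t :=
    fun m => (hasDerivAt_pi.mp hz m).exp
  have hZ := (sum_exp_pos (z t) m).ne'
  refine ((hexp m).div (HasDerivAt.fun_sum fun m' _ => hexp m') hZ).congr_deriv ?_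
  simp only [softmaxDeriv, _root_.softmax, div_mul_eq_mul_div, ← Finset.sum_div]
  field_simp

end Softmax

section MatrixCalculus

variable {𝕜 : Type*} [NontriviallyNormedField 𝕜] {m n p : Type*} [Fintype n] [Fintype p]

theorem HasDerivAt.matrix_mul {A : 𝕜 → Matrix m n 𝕜} {B : 𝕜 → Matrix n p 𝕜}
    {A' : Matrix m n 𝕜} {B' : Matrix n p 𝕜} {t : 𝕜} (hA : HasDerivAt A A' t)
    (hB : HasDerivAt B B' t) : HasDerivAt (fun t => A t * B t) (A' * B t + A t * B') t := by
  refine hasDerivAt_pi.mpr fun i => hasDerivAt_pi.mpr fun j => ?_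
  simp only [Matrix.mul_apply, Matrix.add_apply, ← Finset.sum_add_distrib]
  exact HasDerivAt.fun_sum fun k _ =>
    (hasDerivAt_pi.mp (hasDerivAt_pi.mp hA i) k).mul (hasDerivAt_pi.mp (hasDerivAt_pi.mp hB k) j)

theorem Differentiable.matrix_mul {E : Type*} [NormedAddCommGroup E] [NormedSpace 𝕜 E]
    {A : E → Matrix m n 𝕜} {B : E → Matrix n p 𝕜} (hA : Differentiable 𝕜 A)
    (hB : Differentiable 𝕜 B) : Differentiable 𝕜 fun x => A x * B x := by
  refine differentiable_pi.mpr fun i => differentiable_pi.mpr fun j => ?_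
  simp only [Matrix.mul_apply]
  exact Differentiable.fun_sum fun k _ =>
    (differentiable_pi.mp (differentiable_pi.mp hA i) k).mul
      (differentiable_pi.mp (differentiable_pi.mp hB k) j)

end MatrixCalculus

noncomputable def attnFDeriv {l dQ dV : ℕ} (M : Matrix (Fin l) (Fin l) ℝ)
    (q k Δq Δk : Matrix (Fin l) (Fin dQ) ℝ) (v Δv : Matrix (Fin l) (Fin dV) ℝ) :
    Matrix (Fin l) (Fin dV) ℝ :=
  Matrix.of (fun i => softmaxDeriv (((1 / (dQ : ℝ)) • (q * kᵀ) + M) i)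
      (((1 / (dQ : ℝ)) • (Δq * kᵀ + q * Δkᵀ)) i)) * v +
    softmaxRows ((1 / (dQ : ℝ)) • (q * kᵀ) + M) * Δv

section Attention

variable {l dQ dV : ℕ} (M : Matrix (Fin l) (Fin l) ℝ)

theorem differentiable_attnF : Differentiable ℝ (attnF (l := l) (dQ := dQ) (dV := dV) M) := by
  unfold attnF
  refine Differentiable.matrix_mul (differentiable_pi.mpr fun i => Differentiable.softmax ?_)
    (by fun_prop)
  have hkT : Differentiable ℝ fun x : Matrix (Fin l) (Fin dQ) ℝ × Matrix (Fin l) (Fin dQ) ℝ ×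
      Matrix (Fin l) (Fin dV) ℝ => x.2.1ᵀ :=
    differentiable_pi.mpr fun i => differentiable_pi.mpr fun j => by
      simp only [Matrix.transpose_apply]; fun_prop
  exact differentiable_pi.mp
    (((differentiable_fst.matrix_mul hkT).const_smul (1 / (dQ : ℝ))).add_const M) i

variable (q k Δq Δk : Matrix (Fin l) (Fin dQ) ℝ) (v Δv : Matrix (Fin l) (Fin dV) ℝ)

theorem hasLineDerivAt_attnF :
    HasLineDerivAt ℝ (attnF M) (attnFDeriv M q k Δq Δk v Δv) (q, k, v) (Δq, Δk, Δv) := by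
  have hline : ∀ {a b : ℕ} (x Δ : Matrix (Fin a) (Fin b) ℝ),
      HasDerivAt (fun t : ℝ => x + t • Δ) Δ 0 := fun x Δ =>
    (((hasDerivAt_id' 0).smul_const Δ).const_add x).congr_deriv (one_smul ℝ Δ)
  have hkT : HasDerivAt (fun t : ℝ => (k + t • Δk)ᵀ) Δkᵀ 0 := by
    simpa only [Matrix.transpose_add, Matrix.transpose_smul] using hline kᵀ Δkᵀ
  have hscores : HasDerivAt (fun t : ℝ => (1 / (dQ : ℝ)) • ((q + t • Δq) * (k + t • Δk)ᵀ) + M)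
      ((1 / (dQ : ℝ)) • (Δq * kᵀ + q * Δkᵀ)) 0 := by
    have h := (((hline q Δq).matrix_mul hkT).const_smul (1 / (dQ : ℝ))).add_const M
    simp only [zero_smul, add_zero, Pi.smul_apply] at h
    exact h
  have hsoftmax : HasDerivAt
      (fun t : ℝ => softmaxRows ((1 / (dQ : ℝ)) • ((q + t • Δq) * (k + t • Δk)ᵀ) + M))
      (Matrix.of (fun i => softmaxDeriv (((1 / (dQ : ℝ)) • (q * kᵀ) + M) i)
          (((1 / (dQ : ℝ)) • (Δq * kᵀ + q * Δkᵀ)) i))) 0 := by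
    have h := hasDerivAt_pi.mpr fun i => (hasDerivAt_pi.mp hscores i).softmax
    simp only [zero_smul, add_zero] at h
    exact h
  have h := hsoftmax.matrix_mul (hline v Δv)
  simp only [zero_smul, add_zero] at h
  exact h

theorem fderiv_attnF_apply :
    fderiv ℝ (attnF M) (q, k, v) (Δq, Δk, Δv) = attnFDeriv M q k Δq Δk v Δv :=
  ((differentiable_attnF M _).hasFDerivAt.hasLineDerivAt _).unique
    (hasLineDerivAt_attnF M q k Δq Δk v Δv)

theorem rms_attnFDeriv_apply_le (i : Fin l) :
    rms (attnFDeriv M q k Δq Δk v Δv i) ≤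
      (infRMS Δq * infRMS k + infRMS q * infRMS Δk) * infRMS v + infRMS Δv := by
  have : Nonempty (Fin l) := ⟨i⟩
  have hscores : ∀ m, |((1 / (dQ : ℝ)) • (Δq * kᵀ + q * Δkᵀ)) i m| ≤
      infRMS Δq * infRMS k + infRMS q * infRMS Δk := fun m => by
    rw [smul_add, Matrix.add_apply]
    exact (abs_add_le _ _).trans (add_le_add (abs_smul_mul_transpose_apply_le Δq k i m)
      (abs_smul_mul_transpose_apply_le q Δk i m))
  have hweights : ∑ m, |softmaxRows ((1 / (dQ : ℝ)) • (q * kᵀ) + M) i m| = 1 := by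
    simp only [softmaxRows_apply, abs_of_nonneg (softmax_nonneg _ _), sum_softmax]
  refine (rms_add_le _ _).trans
    ((add_le_add (rms_mul_row_le _ v i) (rms_mul_row_le _ Δv i)).trans ?_)
  rw [hweights, one_mul]
  exact add_le_add_left
    (mul_le_mul_of_nonneg_right (sum_abs_softmaxDeriv_le hscores) (infRMS_nonneg v)) _

end Attention

theorem functional_attention_lipschitz_bound_general
    (l dQ dV : ℕ)
    (M : Matrix (Fin l) (Fin l) ℝ) :
    Differentiable ℝ (attnF (l := l) (dQ := dQ) (dV := dV) M) ∧
    ∀ (q k : Matrix (Fin l) (Fin dQ) ℝ) (v : Matrix (Fin l) (Fin dV) ℝ)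
      (Δq Δk : Matrix (Fin l) (Fin dQ) ℝ) (Δv : Matrix (Fin l) (Fin dV) ℝ),
      infRMS (fderiv ℝ (attnF M) (q, k, v) (Δq, Δk, Δv)) ≤
        max 1 (infRMS v * max (infRMS q) (infRMS k)) *
          (infRMS Δq + infRMS Δk + infRMS Δv) := by
  refine ⟨differentiable_attnF M, fun q k v Δq Δk Δv => ?_⟩
  set L := max 1 (infRMS v * max (infRMS q) (infRMS k))
  have hL₁ : 1 ≤ L := le_max_left _ _
  have hLq : infRMS v * infRMS q ≤ L :=
    (mul_le_mul_of_nonneg_left (le_max_left _ _) (infRMS_nonneg v)).trans (le_max_right _ _)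
  have hLk : infRMS v * infRMS k ≤ L :=
    (mul_le_mul_of_nonneg_left (le_max_right _ _) (infRMS_nonneg v)).trans (le_max_right _ _)
  have := infRMS_nonneg Δq; have := infRMS_nonneg Δk; have := infRMS_nonneg Δv
  rw [fderiv_attnF_apply]
  refine infRMS_le (fun i => (rms_attnFDeriv_apply_le M q k Δq Δk v Δv i).trans ?_) (by positivity)
  calc (infRMS Δq * infRMS k + infRMS q * infRMS Δk) * infRMS v + infRMS Δv
      = infRMS Δq * (infRMS v * infRMS k) + infRMS Δk * (infRMS v * infRMS q) +
          infRMS Δv * 1 := by ring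
    _ ≤ infRMS Δq * L + infRMS Δk * L + infRMS Δv * L := by gcongr
    _ = L * (infRMS Δq + infRMS Δk + infRMS Δv) := by ring

/-- Functional attention `F(q,k,v) = softmax((1/d_Q)·q·kᵀ + M)·v`
is differentiable, and its Fréchet derivative at `(q, k, v)` applied to any
perturbation `(Δq, Δk, Δv)` satisfies
`‖∇F(q,k,v)·(Δq,Δk,Δv)‖_{∞RMS} ≤ max(1, ‖v‖·max(‖q‖,‖k‖))·(‖Δq‖ + ‖Δk‖ + ‖Δv‖)`
in the `∞RMS` norm: functional attention with `1/d_Q` scaling has Lipschitz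
bound `max(1, ‖v‖·max(‖q‖, ‖k‖))` at `(q, k, v)`. -/
theorem functional_attention_lipschitz_bound
    (l dQ dV : ℕ) (hl : 0 < l) (hdQ : 0 < dQ) (hdV : 0 < dV)
    (M : Matrix (Fin l) (Fin l) ℝ) :
    Differentiable ℝ (attnF (l := l) (dQ := dQ) (dV := dV) M) ∧
    ∀ (q k : Matrix (Fin l) (Fin dQ) ℝ) (v : Matrix (Fin l) (Fin dV) ℝ)
      (Δq Δk : Matrix (Fin l) (Fin dQ) ℝ) (Δv : Matrix (Fin l) (Fin dV) ℝ),
      infRMS (fderiv ℝ (attnF M) (q, k, v) (Δq, Δk, Δv)) ≤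
        max 1 (infRMS v * max (infRMS q) (infRMS k)) *
          (infRMS Δq + infRMS Δk + infRMS Δv) :=
  functional_attention_lipschitz_bound_general l dQ dV M
end
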